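/- arXiv:2411.02163 — 2 statements merged into one kernel-verified Lean document; each statement's English description precedes it below -/
import Mathlib

section
/- The operator Q = Σᵢ (-1)ⁱ (h_X Xᵢ + h_Y Yᵢ)(h_X Xᵢ₊₁ + h_Y Yᵢ₊₁) commutes with the Hamiltonian H = Σᵢ (J_X (XᵢXᵢ₊₁ - (h_Y/h_X)² YᵢYᵢ₊₁) + h_X Xᵢ + h_Y Yᵢ) on a periodic chain of even length N, provided h_X ≠ 0. -/
open Complex
open scoped Classical

noncomputable def σx : Matrix (Fin 2) (Fin 2) ℂ := !![0, 1; 1, 0]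
noncomputable def σy : Matrix (Fin 2) (Fin 2) ℂ := !![0, -I; I, 0]
noncomputable def σz : Matrix (Fin 2) (Fin 2) ℂ := !![1, 0; 0, -1]

/-- The single-site operator `M` acting on site `i` of a spin-1/2 chain of `N` sites
(tensored with the identity on all other sites). -/
noncomputable def pauliAt (N : ℕ) (i : Fin N) (M : Matrix (Fin 2) (Fin 2) ℂ) :
    Matrix (Fin N → Fin 2) (Fin N → Fin 2) ℂ :=
  fun f g => M (f i) (g i) * if ∀ j, j ≠ i → f j = g j then 1 else 0

/-!
Put `A = hX σx + hY σy` and `B = hX σx - hY σy`. Then `A² = hX² + hY²`, the field term of `H` is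
`∑ Aᵢ`, and the anisotropic coupling is symmetrised:
`XᵢXᵢ₊₁ - (hY/hX)² YᵢYᵢ₊₁ = (AᵢBᵢ₊₁ + BᵢAᵢ₊₁) / (2 hX²)`. Since the `Aᵢ` commute with each other,
`Q = ∑ (-1)ⁱ AᵢAᵢ₊₁` commutes with the field, and locality gives
`[Q, Bₖ] = (-1)ᵏ⁻¹ Aₖ₋₁Cₖ + (-1)ᵏ CₖAₖ₊₁` with `Cₖ = [Aₖ, Bₖ]`. Inserting this into
`[Q, AⱼBⱼ₊₁ + BⱼAⱼ₊₁] = Aⱼ[Q, Bⱼ₊₁] + [Q, Bⱼ]Aⱼ₊₁` and using `A² = const`, every term appears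
twice with opposite signs at neighbouring sites, so the sum telescopes to zero. The sign
`(-1)ⁱ` alternates around the ring exactly because `N` is even.
-/

attribute [local instance] LieRing.ofAssociativeRing

namespace Ring

variable {R : Type*} [Ring R]

theorem mul_lie (x y z : R) : ⁅x * y, z⁆ = x * ⁅y, z⁆ + ⁅x, z⁆ * y := by
  simp only [LieRing.of_associative_ring_bracket, mul_sub, sub_mul, mul_assoc]; abel

theorem lie_mul (x y z : R) : ⁅x, y * z⁆ = ⁅x, y⁆ * z + y * ⁅x, z⁆ := by
  simp only [LieRing.of_associative_ring_bracket, mul_sub, sub_mul, mul_assoc]; abel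

end Ring

theorem Fintype.sum_sub_add_right_eq_zero {ι M : Type*} [AddGroup ι] [Fintype ι]
    [AddCommGroup M] (f : ι → M) (d : ι) : ∑ i, (f (i + d) - f i) = 0 := by
  rw [Finset.sum_sub_distrib, sub_eq_zero]
  exact Fintype.sum_equiv (Equiv.addRight d) _ _ fun _ => rfl

section StaggeredBonds

variable {ι K R : Type*} [AddCommGroup ι] [Fintype ι] [CommRing K] [Ring R] [Algebra K R]
  (s : ι → K) (d : ι) {a b : ι → R}

theorem staggered_bonds_commute_site (ha : ∀ i j, Commute (a i) (a j)) (j : ι) :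
    Commute (∑ i, s i • (a i * a (i + d))) (a j) :=
  Commute.sum_left _ _ _ fun i _ => ((ha i j).mul_left (ha (i + d) j)).smul_left (s i)

theorem lie_staggered_bonds_other_site (hab : ∀ i j, i ≠ j → Commute (a i) (b j)) (k : ι) :
    ⁅∑ i, s i • (a i * a (i + d)), b k⁆
      = s (k - d) • (a (k - d) * ⁅a k, b k⁆) + s k • (⁅a k, b k⁆ * a (k + d)) := by
  simp only [sum_lie, smul_lie, Ring.mul_lie, smul_add, Finset.sum_add_distrib]
  congr 1
  · rw [Fintype.sum_eq_single (k - d) fun i hi => ?_, sub_add_cancel]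
    rw [show ⁅a (i + d), b k⁆ = 0 from (hab _ _ fun h => hi (eq_sub_of_add_eq h)).lie_eq,
      mul_zero, smul_zero]
  · refine Fintype.sum_eq_single k fun i hi => ?_
    rw [show ⁅a i, b k⁆ = 0 from (hab _ _ hi).lie_eq, zero_mul, smul_zero]

theorem staggered_bonds_commute_mixed_bonds (ha : ∀ i j, Commute (a i) (a j))
    (hab : ∀ i j, i ≠ j → Commute (a i) (b j)) (α : K)
    (hsq : ∀ i, a i * a i = algebraMap K R α) (hs : ∀ i, s (i + d) = -s i) :
    Commute (∑ i, s i • (a i * a (i + d))) (∑ j, (a j * b (j + d) + b j * a (j + d))) := by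
  set q := ∑ i, s i • (a i * a (i + d))
  have hqa : ∀ j, ⁅q, a j⁆ = 0 := fun j => (staggered_bonds_commute_site s d ha j).lie_eq
  let F : ι → R := fun j => s j • (algebraMap K R α * ⁅a j, b j⁆)
  let G : ι → R := fun j => s j • (a (j - d) * ⁅a j, b j⁆ * a (j + d))
  have hbond : ∀ j, ⁅q, a j * b (j + d) + b j * a (j + d)⁆
      = (F j - F (j + d)) + (G (j + d) - G j) := by
    intro j
    have hprev : s (j - d) = -s j := by rw [← neg_neg (s (j - d)), ← hs, sub_add_cancel]
    rw [lie_add, Ring.lie_mul, Ring.lie_mul, hqa, hqa, zero_mul, mul_zero, zero_add, add_zero,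
      lie_staggered_bonds_other_site s d hab, lie_staggered_bonds_other_site s d hab,
      add_sub_cancel_right]
    simp only [F, G, add_sub_cancel_right, hs, hprev, mul_add, add_mul, mul_smul_comm,
      smul_mul_assoc, neg_smul, mul_neg, neg_mul]
    rw [← mul_assoc (a j), hsq, mul_assoc _ (a (j + d)), hsq, ← Algebra.commutes]
    simp only [mul_assoc]
    abel
  refine commute_iff_lie_eq.mpr (?_ : ⁅q, ∑ j, (a j * b (j + d) + b j * a (j + d))⁆ = 0)
  rw [lie_sum, Fintype.sum_congr _ _ hbond, Finset.sum_add_distrib,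
    Fintype.sum_sub_add_right_eq_zero G, add_zero, ← neg_eq_zero, ← Finset.sum_neg_distrib]
  simpa only [neg_sub] using Fintype.sum_sub_add_right_eq_zero F d

end StaggeredBonds

section PauliAt

variable {N : ℕ} (i : Fin N) (M M' : Matrix (Fin 2) (Fin 2) ℂ)

theorem pauliAt_add : pauliAt N i (M + M') = pauliAt N i M + pauliAt N i M' := by
  ext f g; simp only [pauliAt, Matrix.add_apply, add_mul]

theorem pauliAt_sub : pauliAt N i (M - M') = pauliAt N i M - pauliAt N i M' := by
  ext f g; simp only [pauliAt, Matrix.sub_apply, sub_mul]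

theorem pauliAt_smul (c : ℂ) : pauliAt N i (c • M) = c • pauliAt N i M := by
  ext f g; simp only [pauliAt, Matrix.smul_apply, smul_eq_mul, mul_assoc]

theorem pauliAt_one : pauliAt N i 1 = 1 := by
  ext f g
  have hfg : (f i = g i ∧ ∀ j, j ≠ i → f j = g j) ↔ f = g := by
    rw [← Function.update_eq_iff (f := f), Function.update_eq_self]
  simp only [pauliAt, Matrix.one_apply, ite_zero_mul_ite_zero, mul_one, hfg]

theorem pauliAt_mul_apply (j : Fin N) (f g : Fin N → Fin 2) :
    (pauliAt N i M * pauliAt N j M') f g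
      = ∑ x, M (f i) x * pauliAt N j M' (Function.update f i x) g := by
  rw [Matrix.mul_apply,
    ← Finset.sum_subset (Finset.subset_univ (.image (Function.update f i) .univ)),
    Finset.sum_image fun x _ y _ h => by simpa using congr_fun h i]
  · refine Finset.sum_congr rfl fun x _ => ?_
    rw [pauliAt, Function.update_self, if_pos fun k hk => (Function.update_of_ne hk _ _).symm,
      mul_one]
  · intro h _ hh
    rw [pauliAt, if_neg, mul_zero, zero_mul]
    exact fun hfh => hh (Finset.mem_image.mpr
      ⟨h i, Finset.mem_univ _, Function.update_eq_iff.mpr ⟨rfl, hfh⟩⟩)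

theorem pauliAt_mul_pauliAt_self : pauliAt N i M * pauliAt N i M' = pauliAt N i (M * M') := by
  ext f g
  have hoff : ∀ x, (∀ k, k ≠ i → Function.update f i x k = g k) ↔ ∀ k, k ≠ i → f k = g k :=
    fun x => forall₂_congr fun k hk => by rw [Function.update_of_ne hk]
  rw [pauliAt_mul_apply]
  simp only [pauliAt, Function.update_self, hoff, Matrix.mul_apply, Finset.sum_mul, mul_assoc]

theorem pauliAt_mul_pauliAt_apply_of_ne {j : Fin N} (hij : i ≠ j) (f g : Fin N → Fin 2) :
    (pauliAt N i M * pauliAt N j M') f g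
      = M (f i) (g i) * M' (f j) (g j) * if ∀ k, k ≠ i → k ≠ j → f k = g k then 1 else 0 := by
  have hoff : ∀ x, (∀ k, k ≠ j → Function.update f i x k = g k)
      ↔ x = g i ∧ ∀ k, k ≠ i → k ≠ j → f k = g k := by
    refine fun x => ⟨fun h => ⟨by simpa using h i hij, fun k hki hkj => ?_⟩, ?_⟩
    · rw [← h k hkj, Function.update_of_ne hki]
    · rintro ⟨rfl, h⟩ k hkj
      by_cases hki : k = i
      · rw [hki, Function.update_self]
      · rw [Function.update_of_ne hki, h k hki hkj]
  rw [pauliAt_mul_apply]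
  simp only [pauliAt, Function.update_of_ne hij.symm, hoff, ite_and, mul_ite, mul_one, mul_zero,
    Finset.sum_ite_eq', Finset.mem_univ, if_true]

theorem pauliAt_commute {j : Fin N} (hij : i ≠ j) : Commute (pauliAt N i M) (pauliAt N j M') := by
  refine Matrix.ext fun f g => ?_
  rw [pauliAt_mul_pauliAt_apply_of_ne i M M' hij, pauliAt_mul_pauliAt_apply_of_ne j M' M hij.symm,
    mul_comm (M (f i) (g i))]
  exact congrArg _ (if_congr (forall_congr' fun k => imp.swap) rfl rfl)

end PauliAt

theorem σx_mul_σx : σx * σx = 1 := by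
  ext i j; fin_cases i <;> fin_cases j <;> simp [σx, Matrix.mul_apply]

theorem σy_mul_σy : σy * σy = 1 := by
  ext i j; fin_cases i <;> fin_cases j <;> simp [σy, Matrix.mul_apply]

theorem σx_mul_σy_add_σy_mul_σx : σx * σy + σy * σx = 0 := by
  ext i j; fin_cases i <;> fin_cases j <;> simp [σx, σy]

theorem smul_σx_add_smul_σy_mul_self (u v : ℂ) :
    (u • σx + v • σy) * (u • σx + v • σy) = (u ^ 2 + v ^ 2) • 1 :=
  calc (u • σx + v • σy) * (u • σx + v • σy)
      = u ^ 2 • (σx * σx) + (u * v) • (σx * σy + σy * σx) + v ^ 2 • (σy * σy) := by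
        simp only [add_mul, mul_add, smul_mul_smul_comm]; module
    _ = (u ^ 2 + v ^ 2) • 1 := by
        rw [σx_mul_σx, σy_mul_σy, σx_mul_σy_add_σy_mul_σx]; module

theorem mul_sub_div_sq_smul_mul_eq {𝕜 R : Type*} [Field 𝕜] [NeZero (2 : 𝕜)] [Ring R]
    [Algebra 𝕜 R] {u : 𝕜} (hu : u ≠ 0) (v : 𝕜) (x y x' y' : R) :
    x * x' - (v / u) ^ 2 • (y * y') = (2 * u ^ 2)⁻¹ •
      ((u • x + v • y) * (u • x' - v • y') + (u • x - v • y) * (u • x' + v • y')) := by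
  simp only [mul_add, add_mul, mul_sub, sub_mul, smul_mul_smul_comm]
  match_scalars <;> field_simp <;> ring

theorem neg_one_pow_val_add_one {R : Type*} [Ring R] {N : ℕ} [NeZero N]
    (hN : Even N) (i : Fin N) : (-1 : R) ^ ((i + 1 : Fin N) : ℕ) = -(-1) ^ (i : ℕ) := by
  have hN1 : 1 < N := by obtain ⟨m, hm⟩ := hN; have := NeZero.ne N; omega
  rw [Fin.val_add, Fin.val_one', Nat.mod_eq_of_lt hN1, neg_one_pow_eq_pow_mod_two,
    Nat.mod_mod_of_dvd _ (even_iff_two_dvd.mp hN), ← neg_one_pow_eq_pow_mod_two, pow_succ,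
    mul_neg_one]

theorem staggered_XY_quadratic_commutes
    (N : ℕ) [NeZero N] (hN : Even N) (JX hX hY : ℝ) (hhX : hX ≠ 0)
    (H : Matrix (Fin N → Fin 2) (Fin N → Fin 2) ℂ)
    (hH : H = ∑ i : Fin N,
      ((JX : ℂ) • (pauliAt N i σx * pauliAt N (i + 1) σx
          - ((hY / hX : ℝ) : ℂ) ^ 2 • (pauliAt N i σy * pauliAt N (i + 1) σy))
        + (hX : ℂ) • pauliAt N i σx + (hY : ℂ) • pauliAt N i σy))
    (Q : Matrix (Fin N → Fin 2) (Fin N → Fin 2) ℂ)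
    (hQ : Q = ∑ i : Fin N, ((-1 : ℂ) ^ (i : ℕ)) •
      (((hX : ℂ) • pauliAt N i σx + (hY : ℂ) • pauliAt N i σy)
        * ((hX : ℂ) • pauliAt N (i + 1) σx + (hY : ℂ) • pauliAt N (i + 1) σy))) :
    Q * H = H * Q := by
  set a : Fin N → Matrix (Fin N → Fin 2) (Fin N → Fin 2) ℂ :=
    fun i => pauliAt N i ((hX : ℂ) • σx + (hY : ℂ) • σy)
  set b : Fin N → Matrix (Fin N → Fin 2) (Fin N → Fin 2) ℂ :=
    fun i => pauliAt N i ((hX : ℂ) • σx - (hY : ℂ) • σy)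
  have hQ' : Q = ∑ i : Fin N, (-1 : ℂ) ^ (i : ℕ) • (a i * a (i + 1)) := by
    simp only [hQ, a, pauliAt_add, pauliAt_smul]
  have hH' : H = ((JX : ℂ) * (2 * (hX : ℂ) ^ 2)⁻¹) • ∑ j, (a j * b (j + 1) + b j * a (j + 1))
      + ∑ j, a j := by
    rw [hH, Finset.smul_sum, ← Finset.sum_add_distrib]
    refine Finset.sum_congr rfl fun i _ => ?_
    rw [Complex.ofReal_div, mul_sub_div_sq_smul_mul_eq (Complex.ofReal_ne_zero.mpr hhX)]
    simp only [a, b, pauliAt_add, pauliAt_sub, pauliAt_smul, smul_smul, add_assoc]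
  have ha : ∀ i j, Commute (a i) (a j) := fun i j =>
    if hij : i = j then hij ▸ Commute.refl _ else pauliAt_commute i _ _ hij
  have hab : ∀ i j, i ≠ j → Commute (a i) (b j) := fun i j hij => pauliAt_commute i _ _ hij
  have hsq : ∀ i, a i * a i = algebraMap ℂ _ ((hX : ℂ) ^ 2 + (hY : ℂ) ^ 2) := fun i => by
    rw [pauliAt_mul_pauliAt_self, smul_σx_add_smul_σy_mul_self, pauliAt_smul, pauliAt_one,
      Algebra.algebraMap_eq_smul_one]
  let s : Fin N → ℂ := fun i => (-1) ^ (i : ℕ)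
  have hbonds := staggered_bonds_commute_mixed_bonds s 1 ha hab _ hsq (neg_one_pow_val_add_one hN)
  have hfield := staggered_bonds_commute_site s 1 ha
  rw [hQ', hH']
  exact (hbonds.smul_right _).add_right (Commute.sum_right _ _ _ fun j _ => hfield j)
end

section
/- For the Heisenberg Hamiltonian H = Σᵢ (XᵢXᵢ₊₁ + YᵢYᵢ₊₁ + ZᵢZᵢ₊₁) on a periodic chain of N ≥ 3 sites, the quantity Q₃ = Σᵢ (σᵢ × σᵢ₊₁) · σᵢ₊₂ = Σᵢ (XᵢYᵢ₊₁Zᵢ₊₂ + YᵢZᵢ₊₁Xᵢ₊₂ + ZᵢXᵢ₊₁Yᵢ₊₂ - YᵢXᵢ₊₁Zᵢ₊₂ - ZᵢYᵢ₊₁Xᵢ₊₂ - XᵢZᵢ₊₁Yᵢ₊₂) commutes with H. -/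
open Complex
open scoped Classical

/-!
Let `P_ab` exchange the spins at sites `a` and `b`. Dirac's exchange identity
`σ_a · σ_b = 2 P_ab - 1` and its three-site analogue `(σ_a × σ_b) · σ_c = 2i [P_ab, P_bc]` hold
entrywise, since all operators involved are products over sites that are trivial off `{a, b, c}`.
Hence `H = 2 Σ pᵢ - N` and `Q₃ = 2i Σ [pᵢ, pᵢ₊₁]` with `pᵢ = P_{i,i+1}`, and these transpositions
satisfy `pᵢ² = 1`, the braid relation and far commutativity. For any such `p`,
`[Σ pⱼ, Σ [pᵢ, pᵢ₊₁]] = Σ_d Σ_i [p_{i+d}, [pᵢ, pᵢ₊₁]]`: the shifts `d = 0, 1` add up to the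
telescoping sum `2 Σ (pᵢ₊₁ - pᵢ)` by the braid relation, the shifts `d = 2` and `d = -1` cancel by
the Jacobi identity because `pᵢ` and `pᵢ₊₂` commute, and all other shifts vanish by far
commutativity. When `N = 3` the shifts `2` and `-1` coincide, and that one term is a Jacobi sum.
-/

section TensorOperators

variable {ι n R : Type*} [Fintype ι] [CommRing R]

def tensorOp (M : ι → Matrix n n R) : Matrix (ι → n) (ι → n) R :=
  Matrix.of fun f g => ∏ k, M k (f k) (g k)

theorem tensorOp_apply (M : ι → Matrix n n R) (f g : ι → n) :
    tensorOp M f g = ∏ k, M k (f k) (g k) := rfl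

theorem tensorOp_mul [DecidableEq ι] [Fintype n] (M M' : ι → Matrix n n R) :
    tensorOp M * tensorOp M' = tensorOp (M * M') := by
  ext f g
  simp only [tensorOp, Matrix.mul_apply, Matrix.of_apply, Pi.mul_apply, Fintype.prod_sum,
    Finset.prod_mul_distrib]

variable [DecidableEq ι] [Fintype n] [DecidableEq n]

def permRep : Equiv.Perm ι →* Matrix (ι → n) (ι → n) R where
  toFun σ := (1 : Matrix (ι → n) (ι → n) R).submatrix (· ∘ σ) id
  map_one' := rfl
  map_mul' σ τ := by
    ext f g
    simp only [Matrix.mul_apply, Matrix.submatrix_apply, Matrix.one_apply, id, ite_mul, one_mul,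
      zero_mul, Finset.sum_ite_eq, Finset.mem_univ, if_true]
    rfl

theorem permRep_apply (σ : Equiv.Perm ι) (f g : ι → n) :
    permRep σ f g = ∏ k, if f (σ k) = g k then (1 : R) else 0 := by
  change (1 : Matrix (ι → n) (ι → n) R) (f ∘ σ) g = _
  simp only [Matrix.one_apply, Finset.prod_boole, Finset.mem_univ, true_implies, funext_iff,
    Function.comp_apply]

end TensorOperators

section LocalEntries

variable {ι n R : Type*} [Fintype ι] [DecidableEq ι] [DecidableEq n] [CommRing R] {a b c : ι}

theorem Finset.prod_univ_eq_mul_mul_prod_compl_of_eq {M : Type*} [CommMonoid M] (hab : a ≠ b)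
    {F G : ι → M} (h : ∀ k, k ≠ a → k ≠ b → F k = G k) :
    ∏ k, F k = F a * F b * ∏ k ∈ {a, b}ᶜ, G k := by
  rw [← Finset.prod_mul_prod_compl {a, b}, Finset.prod_pair hab]
  refine congrArg _ (Finset.prod_congr rfl fun k hk => ?_)
  simp only [Finset.mem_compl, Finset.mem_insert, Finset.mem_singleton, not_or] at hk
  exact h k hk.1 hk.2

theorem Finset.prod_univ_eq_mul_mul_mul_prod_compl_of_eq {M : Type*} [CommMonoid M] (hab : a ≠ b)
    (hac : a ≠ c) (hbc : b ≠ c) {F G : ι → M} (h : ∀ k, k ≠ a → k ≠ b → k ≠ c → F k = G k) :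
    ∏ k, F k = F a * F b * F c * ∏ k ∈ {a, b, c}ᶜ, G k := by
  rw [← Finset.prod_mul_prod_compl {a, b, c}, Finset.prod_insert (by simp [hab, hac]),
    Finset.prod_pair hbc, ← mul_assoc]
  refine congrArg _ (Finset.prod_congr rfl fun k hk => ?_)
  simp only [Finset.mem_compl, Finset.mem_insert, Finset.mem_singleton, not_or] at hk
  exact h k hk.1 hk.2.1 hk.2.2

theorem tensorOp_apply_of_eq_one_off_pair (hab : a ≠ b) {M : ι → Matrix n n R}
    (hM : ∀ k, k ≠ a → k ≠ b → M k = 1) (f g : ι → n) :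
    tensorOp M f g = M a (f a) (g a) * M b (f b) (g b)
      * ∏ k ∈ {a, b}ᶜ, if f k = g k then (1 : R) else 0 :=
  Finset.prod_univ_eq_mul_mul_prod_compl_of_eq hab fun k hka hkb => by
    rw [hM k hka hkb, Matrix.one_apply]

theorem tensorOp_apply_of_eq_one_off_triple (hab : a ≠ b) (hac : a ≠ c) (hbc : b ≠ c)
    {M : ι → Matrix n n R} (hM : ∀ k, k ≠ a → k ≠ b → k ≠ c → M k = 1) (f g : ι → n) :
    tensorOp M f g = M a (f a) (g a) * M b (f b) (g b) * M c (f c) (g c)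
      * ∏ k ∈ {a, b, c}ᶜ, if f k = g k then (1 : R) else 0 :=
  Finset.prod_univ_eq_mul_mul_mul_prod_compl_of_eq hab hac hbc fun k hka hkb hkc => by
    rw [hM k hka hkb hkc, Matrix.one_apply]

variable [Fintype n]

-- The images `a'`, `b'` are parameters because rewriting `σ a` inside an `if` afterwards would
-- leave the old `Decidable` instance behind, and `ring` would no longer identify the terms.
theorem permRep_apply_of_fixed_off_pair (hab : a ≠ b) {σ : Equiv.Perm ι} {a' b' : ι}
    (ha : σ a = a') (hb : σ b = b') (hσ : ∀ k, k ≠ a → k ≠ b → σ k = k) (f g : ι → n) :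
    permRep σ f g = (if f a' = g a then 1 else 0) * (if f b' = g b then 1 else 0)
      * ∏ k ∈ {a, b}ᶜ, if f k = g k then (1 : R) else 0 := by
  rw [permRep_apply, ← ha, ← hb]
  exact Finset.prod_univ_eq_mul_mul_prod_compl_of_eq hab fun k hka hkb => by rw [hσ k hka hkb]

theorem permRep_apply_of_fixed_off_triple (hab : a ≠ b) (hac : a ≠ c) (hbc : b ≠ c)
    {σ : Equiv.Perm ι} {a' b' c' : ι} (ha : σ a = a') (hb : σ b = b') (hc : σ c = c')
    (hσ : ∀ k, k ≠ a → k ≠ b → k ≠ c → σ k = k) (f g : ι → n) :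
    permRep σ f g = (if f a' = g a then 1 else 0) * (if f b' = g b then 1 else 0)
      * (if f c' = g c then 1 else 0) * ∏ k ∈ {a, b, c}ᶜ, if f k = g k then (1 : R) else 0 := by
  rw [permRep_apply, ← ha, ← hb, ← hc]
  exact Finset.prod_univ_eq_mul_mul_mul_prod_compl_of_eq hab hac hbc fun k hka hkb hkc => by
    rw [hσ k hka hkb hkc]

end LocalEntries

theorem pauliAt_eq_tensorOp {N : ℕ} (i : Fin N) (M : Matrix (Fin 2) (Fin 2) ℂ) :
    pauliAt N i M = tensorOp (Pi.mulSingle i M) := by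
  ext f g
  rw [tensorOp_apply, Fintype.prod_eq_mul_prod_compl i, Pi.mulSingle_eq_same]
  have hoff : ∀ k ∈ ({i}ᶜ : Finset (Fin N)), (Pi.mulSingle i M : Fin N → _) k = 1 :=
    fun k hk => by simp_all
  rw [Finset.prod_congr rfl fun k hk => by rw [hoff k hk]]
  simp [pauliAt, Matrix.one_apply, Finset.prod_boole]

theorem pauli_dot_apply (s t s' t' : Fin 2) :
    σx s t * σx s' t' + σy s t * σy s' t' + σz s t * σz s' t'
      = 2 * ((if s' = t then 1 else 0) * (if s = t' then 1 else 0))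
        - (if s = t then 1 else 0) * (if s' = t' then 1 else 0) := by
  fin_cases s <;> fin_cases t <;> fin_cases s' <;> fin_cases t' <;> simp [σx, σy, σz] <;> norm_num

theorem pauli_triple_apply (s₁ t₁ s₂ t₂ s₃ t₃ : Fin 2) :
    σx s₁ t₁ * σy s₂ t₂ * σz s₃ t₃ + σy s₁ t₁ * σz s₂ t₂ * σx s₃ t₃
      + σz s₁ t₁ * σx s₂ t₂ * σy s₃ t₃ - σy s₁ t₁ * σx s₂ t₂ * σz s₃ t₃
      - σz s₁ t₁ * σy s₂ t₂ * σx s₃ t₃ - σx s₁ t₁ * σz s₂ t₂ * σy s₃ t₃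
      = 2 * I
        * ((if s₂ = t₁ then 1 else 0) * (if s₃ = t₂ then 1 else 0) * (if s₁ = t₃ then 1 else 0)
          - (if s₃ = t₁ then 1 else 0) * (if s₁ = t₂ then 1 else 0) * (if s₂ = t₃ then 1 else 0)) := by
  fin_cases s₁ <;> fin_cases t₁ <;> fin_cases s₂ <;> fin_cases t₂ <;> fin_cases s₃ <;>
    fin_cases t₃ <;> simp [σx, σy, σz] <;> ring

section PauliExchange

variable {N : ℕ} {a b c : Fin N}

open Equiv in
theorem pauliAt_dot_eq_two_swap_sub_one (hab : a ≠ b) :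
    pauliAt N a σx * pauliAt N b σx + pauliAt N a σy * pauliAt N b σy
        + pauliAt N a σz * pauliAt N b σz
      = (2 : ℂ) • permRep (swap a b) - 1 := by
  have hoff : ∀ A B : Matrix (Fin 2) (Fin 2) ℂ, ∀ k, k ≠ a → k ≠ b →
      (Pi.mulSingle a A * Pi.mulSingle b B : Fin N → Matrix (Fin 2) (Fin 2) ℂ) k = 1 := by
    intro A B k hka hkb
    simp [Pi.mulSingle_eq_of_ne hka, Pi.mulSingle_eq_of_ne hkb]
  ext f g
  rw [← map_one (permRep : Perm (Fin N) →* Matrix (Fin N → Fin 2) (Fin N → Fin 2) ℂ)]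
  simp only [pauliAt_eq_tensorOp, tensorOp_mul, Matrix.add_apply, Matrix.sub_apply,
    Matrix.smul_apply, tensorOp_apply_of_eq_one_off_pair hab (hoff _ _),
    permRep_apply_of_fixed_off_pair hab (swap_apply_left a b) (swap_apply_right a b)
      (fun k hka hkb => swap_apply_of_ne_of_ne hka hkb),
    permRep_apply_of_fixed_off_pair hab (Perm.one_apply a) (Perm.one_apply b) (fun _ _ _ => rfl)]
  simp only [Pi.mul_apply, Pi.mulSingle_eq_same, Pi.mulSingle_eq_of_ne hab,
    Pi.mulSingle_eq_of_ne hab.symm, mul_one, one_mul, smul_eq_mul]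
  linear_combination (∏ k ∈ {a, b}ᶜ, if f k = g k then (1 : ℂ) else 0)
    * pauli_dot_apply (f a) (g a) (f b) (g b)

open Equiv in
theorem pauliAt_triple_eq_lie_swap (hab : a ≠ b) (hac : a ≠ c) (hbc : b ≠ c) :
    pauliAt N a σx * pauliAt N b σy * pauliAt N c σz
        + pauliAt N a σy * pauliAt N b σz * pauliAt N c σx
        + pauliAt N a σz * pauliAt N b σx * pauliAt N c σy
        - pauliAt N a σy * pauliAt N b σx * pauliAt N c σz
        - pauliAt N a σz * pauliAt N b σy * pauliAt N c σx
        - pauliAt N a σx * pauliAt N b σz * pauliAt N c σy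
      = (2 * I) • ⁅(permRep (swap a b) : Matrix (Fin N → Fin 2) (Fin N → Fin 2) ℂ),
          permRep (swap b c)⁆ := by
  have hoff : ∀ A B C : Matrix (Fin 2) (Fin 2) ℂ, ∀ k, k ≠ a → k ≠ b → k ≠ c →
      (Pi.mulSingle a A * Pi.mulSingle b B * Pi.mulSingle c C :
        Fin N → Matrix (Fin 2) (Fin 2) ℂ) k = 1 := by
    intro A B C k hka hkb hkc
    simp [Pi.mulSingle_eq_of_ne hka, Pi.mulSingle_eq_of_ne hkb, Pi.mulSingle_eq_of_ne hkc]
  have hfix : ∀ σ τ : Perm (Fin N), ∀ k, k ≠ a → k ≠ b → k ≠ c →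
      σ k = k → τ k = k → (σ * τ) k = k := fun σ τ k _ _ _ hσ hτ => by
    rw [Perm.mul_apply, hτ, hσ]
  ext f g
  rw [Ring.lie_def, ← map_mul, ← map_mul]
  simp only [pauliAt_eq_tensorOp, tensorOp_mul, Matrix.add_apply, Matrix.sub_apply,
    Matrix.smul_apply, tensorOp_apply_of_eq_one_off_triple hab hac hbc (hoff _ _ _),
    permRep_apply_of_fixed_off_triple hab hac hbc (σ := swap a b * swap b c) (a' := b) (b' := c)
      (c' := a) (by simp [swap_apply_of_ne_of_ne, hab, hac])
      (by simp [swap_apply_of_ne_of_ne, hac.symm, hbc.symm]) (by simp)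
      (fun k hka hkb hkc => hfix _ _ k hka hkb hkc (swap_apply_of_ne_of_ne hka hkb)
        (swap_apply_of_ne_of_ne hkb hkc)),
    permRep_apply_of_fixed_off_triple hab hac hbc (σ := swap b c * swap a b) (a' := c) (b' := a)
      (c' := b) (by simp) (by simp [swap_apply_of_ne_of_ne, hab, hac])
      (by simp [swap_apply_of_ne_of_ne, hac.symm, hbc.symm])
      (fun k hka hkb hkc => hfix _ _ k hka hkb hkc (swap_apply_of_ne_of_ne hkb hkc)
        (swap_apply_of_ne_of_ne hka hkb))]
  simp only [Pi.mul_apply, Pi.mulSingle_eq_same, Pi.mulSingle_eq_of_ne hab,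
    Pi.mulSingle_eq_of_ne hab.symm, Pi.mulSingle_eq_of_ne hac, Pi.mulSingle_eq_of_ne hac.symm,
    Pi.mulSingle_eq_of_ne hbc, Pi.mulSingle_eq_of_ne hbc.symm, mul_one, one_mul, smul_eq_mul]
  linear_combination (∏ k ∈ {a, b, c}ᶜ, if f k = g k then (1 : ℂ) else 0)
    * pauli_triple_apply (f a) (g a) (f b) (g b) (f c) (g c)

end PauliExchange

open Equiv in
theorem Equiv.swap_mul_swap_mul_swap_braid {α : Type*} [DecidableEq α] {a b c : α} (hab : a ≠ b)
    (hac : a ≠ c) (hbc : b ≠ c) :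
    swap a b * swap b c * swap a b = swap b c * swap a b * swap b c :=
  calc swap a b * swap b c * swap a b = swap b a * swap c b * swap b a := by
        rw [swap_comm a b, swap_comm b c]
    _ = swap c a := by rw [swap_mul_swap_mul_swap hbc.symm hac.symm, swap_comm]
    _ = _ := (swap_mul_swap_mul_swap hab hac).symm

theorem Fin.one_add_one_eq_two {N : ℕ} [NeZero N] : (1 : Fin N) + 1 = 2 := by
  open Fin.CommRing in exact _root_.one_add_one_eq_two

theorem Fin.add_one_add_one {N : ℕ} [NeZero N] (i : Fin N) : i + 1 + 1 = i + 2 := by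
  rw [add_assoc, Fin.one_add_one_eq_two]

theorem Fin.ne_add_one_and_ne_add_two {N : ℕ} [NeZero N] (hN : 3 ≤ N) (i : Fin N) :
    i ≠ i + 1 ∧ i ≠ i + 2 ∧ i + 1 ≠ i + 2 := by
  obtain ⟨m, rfl⟩ : ∃ m, N = m + 3 := ⟨N - 3, by omega⟩
  simp [Fin.ext_iff, Nat.mod_eq_of_lt]

theorem Fin.nodup_zero_one_two_neg_one {N : ℕ} [NeZero N] (hN : 4 ≤ N) :
    [(0 : Fin N), 1, 2, -1].Nodup := by
  obtain ⟨m, rfl⟩ : ∃ m, N = m + 4 := ⟨N - 4, by omega⟩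
  simp [Fin.ext_iff, Fin.val_neg, Nat.mod_eq_of_lt]

section BraidRelations

attribute [local instance] LieRing.ofAssociativeRing

variable {R : Type*} [Ring R]

theorem lie_lie_eq_zero_of_commute {a b c : R} (ha : Commute c a) (hb : Commute c b) :
    ⁅c, ⁅a, b⁆⁆ = 0 := by
  rw [leibniz_lie, commute_iff_lie_eq.mp ha, commute_iff_lie_eq.mp hb, zero_lie, lie_zero,
    add_zero]

theorem lie_lie_add_lie_lie_of_braid {a b : R} (ha : a * a = 1) (hb : b * b = 1)
    (hab : a * b * a = b * a * b) : ⁅a, ⁅a, b⁆⁆ + ⁅b, ⁅a, b⁆⁆ = 2 * (b - a) := by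
  simp only [Ring.lie_def]
  calc _ = 2 * (b * a * b - a * b * a) + a * a * b + b * (a * a) - b * b * a - a * (b * b) := by
        noncomm_ring
    _ = 2 * (b - a) := by rw [hab, ha, hb]; noncomm_ring

theorem sum_lie_sum_eq_sum_sum_add {N : ℕ} [NeZero N] (p q : Fin N → R) :
    ⁅∑ j, p j, ∑ i, q i⁆ = ∑ d, ∑ i, ⁅p (i + d), q i⁆ := by
  rw [sum_lie_sum, Finset.sum_comm]
  exact (Finset.sum_congr rfl fun i _ => (Equiv.sum_comp (Equiv.addLeft i) _).symm).trans
    Finset.sum_comm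

theorem commute_sum_lie_sum_of_braid {N : ℕ} [NeZero N] (hN : 3 ≤ N) (p : Fin N → R)
    (hsq : ∀ i, p i * p i = 1)
    (hbraid : ∀ i, p i * p (i + 1) * p i = p (i + 1) * p i * p (i + 1))
    (hfar : ∀ i d, d ≠ -1 → d ≠ 0 → d ≠ 1 → Commute (p i) (p (i + d))) :
    Commute (∑ i, ⁅p i, p (i + 1)⁆) (∑ i, p i) := by
  have hshift : ∀ f : Fin N → R, ∑ i, f (i + 1) = ∑ i, f i :=
    fun f => Equiv.sum_comp (Equiv.addRight 1) f
  set T : Fin N → R := fun d => ∑ i, ⁅p (i + d), ⁅p i, p (i + 1)⁆⁆ with hT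
  have hT01 : T 0 + T 1 = 0 := by
    calc T 0 + T 1 = ∑ i, 2 * (p (i + 1) - p i) := by
          rw [← Finset.sum_add_distrib]
          refine Finset.sum_congr rfl fun i _ => ?_
          rw [add_zero, lie_lie_add_lie_lie_of_braid (hsq i) (hsq (i + 1)) (hbraid i)]
      _ = 0 := by rw [← Finset.mul_sum, Finset.sum_sub_distrib, hshift p, sub_self, mul_zero]
  have hTfar : ∀ d, d ≠ -1 → d ≠ 0 → d ≠ 1 → d ≠ 2 → T d = 0 := by
    intro d hdm hd₀ hd₁ hd₂
    refine Finset.sum_eq_zero fun i _ =>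
      lie_lie_eq_zero_of_commute (hfar i d hdm hd₀ hd₁).symm ?_
    have := hfar (i + 1) (d - 1) (by simpa [sub_eq_iff_eq_add] using hd₀)
      (by simpa [sub_eq_zero] using hd₁)
      (by rwa [Ne, sub_eq_iff_eq_add, Fin.one_add_one_eq_two])
    rw [add_add_sub_cancel] at this
    exact this.symm
  refine (commute_iff_lie_eq.mpr ?_).symm
  rw [sum_lie_sum_eq_sum_sum_add]
  change ∑ d, T d = 0
  rcases hN.eq_or_lt with rfl | hN
  · rw [Fin.sum_univ_three, hT01, zero_add]
    simp only [hT, Fin.sum_univ_three]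
    exact lie_jacobi (p 2) (p 0) (p 1)
  · have hnd := Fin.nodup_zero_one_two_neg_one hN
    simp only [List.nodup_cons, List.mem_cons, List.not_mem_nil, or_false, not_or] at hnd
    obtain ⟨⟨h01', h02', h0m⟩, ⟨h12', h1m⟩, h2m, -⟩ := hnd
    rw [← Finset.sum_subset (Finset.subset_univ {0, 1, 2, -1}) fun d _ hd => ?_,
      Finset.sum_insert (by simp [h01', h02', h0m]), Finset.sum_insert (by simp [h12', h1m]),
      Finset.sum_pair h2m, ← add_assoc, hT01, zero_add]
    · calc T 2 + T (-1)
            = ∑ i, (⁅p (i + 2), ⁅p i, p (i + 1)⁆⁆ + ⁅p i, ⁅p (i + 1), p (i + 2)⁆⁆) := by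
            simp only [hT]
            rw [← hshift (fun i => ⁅p (i + -1), ⁅p i, p (i + 1)⁆⁆), ← Finset.sum_add_distrib]
            simp only [add_assoc, add_neg_cancel, add_zero, Fin.one_add_one_eq_two]
        _ = 0 := Finset.sum_eq_zero fun i _ => by
            have hc := commute_iff_lie_eq.mp (hfar i 2 h2m (Ne.symm h02') (Ne.symm h12')).symm
            rw [← lie_jacobi (p i) (p (i + 1)) (p (i + 2)), hc, lie_zero, add_zero, add_comm]
    · simp only [Finset.mem_insert, Finset.mem_singleton, not_or] at hd
      exact hTfar d hd.2.2.2 hd.1 hd.2.1 hd.2.2.1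

end BraidRelations

section AdjacentTranspositions

variable {n R : Type*} [Fintype n] [DecidableEq n] [CommRing R]

theorem commute_sum_lie_permRep_swap {N : ℕ} [NeZero N] (hN : 3 ≤ N) :
    Commute
      (∑ i : Fin N, ⁅(permRep (Equiv.swap i (i + 1)) : Matrix (Fin N → n) (Fin N → n) R),
        permRep (Equiv.swap (i + 1) (i + 2))⁆)
      (∑ i : Fin N, (permRep (Equiv.swap i (i + 1)) : Matrix (Fin N → n) (Fin N → n) R)) := by
  have hsite := Fin.ne_add_one_and_ne_add_two hN
  have h10 : (1 : Fin N) ≠ 0 := by simpa using (hsite 0).1.symm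
  simp only [← Fin.add_one_add_one]
  refine commute_sum_lie_sum_of_braid hN _ (fun i => ?_) (fun i => ?_) fun i d hdm hd0 hd1 => ?_
  · rw [← map_mul, Equiv.swap_mul_self, map_one]
  · simp only [← map_mul, Fin.add_one_add_one]
    exact congrArg permRep (Equiv.swap_mul_swap_mul_swap_braid (hsite i).1 (hsite i).2.1
      (hsite i).2.2)
  · refine ((Equiv.Perm.disjoint_swap_swap ?_).commute).map permRep
    simp [add_assoc, ← eq_neg_iff_add_eq_zero, hdm, hd0, Ne.symm hd1, h10]

end AdjacentTranspositions

theorem Q3_commutes_with_Heisenberg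
    (N : ℕ) [NeZero N] (hN : 3 ≤ N)
    (H : Matrix (Fin N → Fin 2) (Fin N → Fin 2) ℂ)
    (hH : H = ∑ i : Fin N,
      (pauliAt N i σx * pauliAt N (i + 1) σx
        + pauliAt N i σy * pauliAt N (i + 1) σy
        + pauliAt N i σz * pauliAt N (i + 1) σz))
    (Q₃ : Matrix (Fin N → Fin 2) (Fin N → Fin 2) ℂ)
    (hQ₃ : Q₃ = ∑ i : Fin N,
      (pauliAt N i σx * pauliAt N (i + 1) σy * pauliAt N (i + 2) σz
        + pauliAt N i σy * pauliAt N (i + 1) σz * pauliAt N (i + 2) σx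
        + pauliAt N i σz * pauliAt N (i + 1) σx * pauliAt N (i + 2) σy
        - pauliAt N i σy * pauliAt N (i + 1) σx * pauliAt N (i + 2) σz
        - pauliAt N i σz * pauliAt N (i + 1) σy * pauliAt N (i + 2) σx
        - pauliAt N i σx * pauliAt N (i + 1) σz * pauliAt N (i + 2) σy)) :
    Q₃ * H = H * Q₃ := by
  have hsite := Fin.ne_add_one_and_ne_add_two hN
  have hH' : H = (2 : ℂ) • ∑ i, (permRep (Equiv.swap i (i + 1)) : Matrix (Fin N → Fin 2) _ ℂ)
      - ∑ _i : Fin N, 1 := by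
    rw [hH, Finset.smul_sum, ← Finset.sum_sub_distrib]
    exact Finset.sum_congr rfl fun i _ => pauliAt_dot_eq_two_swap_sub_one (hsite i).1
  have hQ' : Q₃ = (2 * I) • ∑ i, ⁅(permRep (Equiv.swap i (i + 1)) : Matrix (Fin N → Fin 2) _ ℂ),
      permRep (Equiv.swap (i + 1) (i + 2))⁆ := by
    rw [hQ₃, Finset.smul_sum]
    exact Finset.sum_congr rfl fun i _ =>
      pauliAt_triple_eq_lie_swap (hsite i).1 (hsite i).2.1 (hsite i).2.2
  rw [hH', hQ']
  exact ((((commute_sum_lie_permRep_swap hN).smul_right _).sub_right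
    (Commute.sum_right _ _ _ fun _ _ => Commute.one_right _)).smul_left _).eq
end
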